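/- arXiv:1003.5347 — 2 statements merged into one kernel-verified Lean document; each statement's English description precedes it below -/
import Mathlib

section
/- Let s be a prime and let X, Y, Z be positive integers with X, Y, Z < s. Then Σ_{a=1}^{s−1} | R_s(X, Y, Z; a) − X·Y·Z/(s−1) |² = (1/(s−1)) · Σ_{χ ≠ χ₀} |S_s(X; χ)|² · |S_s(Y; χ)|² · |S_s(Z; χ)|², where the sum on the right runs over all nonprincipal multiplicative characters χ modulo s. -/
/-!
For a unit `a`, orthogonality of Dirichlet characters gives
`(s - 1) R_s(X, Y, Z; a) = ∑_χ conj (χ a) S(X; χ) S(Y; χ) conj (S(Z; χ))`.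
The principal character contributes `X Y Z`, so `a ↦ R_s(X, Y, Z; a) - X Y Z / (s - 1)` is a
function on `(ℤ/sℤ)ˣ` whose expansion in characters only involves nonprincipal ones, with
coefficients `S(X; χ) S(Y; χ) conj (S(Z; χ)) / (s - 1)`; Parseval's identity for the characters
of `(ℤ/sℤ)ˣ` then computes its mean square.
-/

open scoped Classical

/-- `R_s(X, Y, Z; a)`: the number of triples `(x, y, z)` with `1 ≤ x ≤ X`, `1 ≤ y ≤ Y`,
`1 ≤ z ≤ Z` and `x y ≡ a z (mod s)`. -/
def Rcount (s X Y Z a : ℕ) : ℕ :=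
  ((Finset.Icc 1 X ×ˢ Finset.Icc 1 Y ×ˢ Finset.Icc 1 Z).filter
    fun t => (t.1 * t.2.1) % s = (a * t.2.2) % s).card

open Finset

namespace MulChar

variable {R : Type*} [CommRing R] [Fintype R]

lemma sum_mul_star_eq (χ ψ : MulChar R ℂ) :
    ∑ a, χ a * star (ψ a) = if χ = ψ then (Nat.card Rˣ : ℂ) else 0 := by
  simp only [star_apply', ← mul_apply]
  split_ifs with h
  · rw [h, mul_inv_cancel, sum_one_eq_card_units, Nat.card_eq_fintype_card]
  · exact sum_eq_zero_of_ne_one (mul_inv_eq_one.not.2 h)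

theorem sum_norm_sq_sum_mul_star (G : Finset (MulChar R ℂ)) (c : MulChar R ℂ → ℂ) :
    ∑ a, ‖∑ χ ∈ G, c χ * star (χ a)‖ ^ 2 = Nat.card Rˣ * ∑ χ ∈ G, ‖c χ‖ ^ 2 := by
  apply Complex.ofReal_injective
  push_cast
  simp only [← Complex.mul_conj']
  calc ∑ a, (∑ χ ∈ G, c χ * star (χ a)) * (starRingEnd ℂ) (∑ ψ ∈ G, c ψ * star (ψ a)) =
        ∑ ψ ∈ G, ∑ χ ∈ G, c χ * star (c ψ) * ∑ a, ψ a * star (χ a) := by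
        simp only [map_sum, map_mul, Complex.star_def, Complex.conj_conj, sum_mul,
          mul_sum]
        rw [sum_comm]
        refine sum_congr rfl fun ψ _ => ?_
        rw [sum_comm]
        exact sum_congr rfl fun χ _ => sum_congr rfl fun a _ => by ring
    _ = ∑ ψ ∈ G, c ψ * star (c ψ) * Nat.card Rˣ := by
        refine sum_congr rfl fun ψ hψ => ?_
        simp only [sum_mul_star_eq, mul_ite, mul_zero, sum_ite_eq, if_pos hψ]
    _ = _ := by
        rw [mul_sum]
        exact sum_congr rfl fun χ _ => by rw [Complex.star_def]; ring

end MulChar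

namespace DirichletCharacter

lemma star_apply_of_isUnit {n : ℕ} (χ : DirichletCharacter ℂ n) {a : ZMod n}
    (ha : IsUnit a) : star (χ a) = χ a⁻¹ := by
  obtain ⟨u, rfl⟩ := ha
  rw [MulChar.star_apply', MulChar.inv_apply_eq_inv', ZMod.inv_coe_unit]
  exact (eq_inv_of_mul_eq_one_left (by rw [← map_mul, Units.inv_mul, map_one])).symm

/-- `S_n(W; χ)` is `charSum χ (Icc 1 W)`. -/
noncomputable def charSum {n : ℕ} (χ : DirichletCharacter ℂ n) (A : Finset ℕ) : ℂ :=
  ∑ x ∈ A, χ x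

lemma charSum_one {n : ℕ} {A : Finset ℕ} (hA : ∀ x ∈ A, IsUnit (x : ZMod n)) :
    charSum (1 : DirichletCharacter ℂ n) A = #A := by
  rw [charSum, sum_congr rfl fun x hx => MulChar.one_apply (hA x hx), sum_const, nsmul_one]

variable {n : ℕ} [NeZero n]

lemma sum_star_mul_eq {a : ZMod n} (ha : IsUnit a) (b : ZMod n) :
    ∑ χ : DirichletCharacter ℂ n, star (χ a) * χ b =
      if a = b then (n.totient : ℂ) else 0 := by
  simp only [star_apply_of_isUnit _ ha, sum_char_inv_mul_char_eq ℂ ha]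

theorem totient_mul_card_eq_sum (A B C : Finset ℕ) {a : ZMod n} (ha : IsUnit a)
    (hC : ∀ z ∈ C, IsUnit (z : ZMod n)) :
    (n.totient : ℂ) * #{t ∈ A ×ˢ B ×ˢ C | (t.1 : ZMod n) * t.2.1 = a * t.2.2} =
      ∑ χ, star (χ a) * (charSum χ A * charSum χ B * star (charSum χ C)) := by
  rw [natCast_card_filter, mul_sum]
  calc ∑ t ∈ A ×ˢ B ×ˢ C,
        (n.totient : ℂ) * (if (t.1 : ZMod n) * t.2.1 = a * t.2.2 then 1 else 0) =
        ∑ t ∈ A ×ˢ B ×ˢ C, ∑ χ : DirichletCharacter ℂ n,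
          star (χ (a * t.2.2)) * χ ((t.1 : ZMod n) * t.2.1) := by
        refine sum_congr rfl fun t ht => ?_
        rw [sum_star_mul_eq (ha.mul (hC _ (mem_product.1 (mem_product.1 ht).2).2)), mul_ite,
          mul_one, mul_zero]
        exact if_congr eq_comm rfl rfl
    _ = ∑ χ : DirichletCharacter ℂ n, ∑ t ∈ A ×ˢ B ×ˢ C,
          star (χ a) * (χ t.1 * χ t.2.1 * star (χ t.2.2)) := by
        rw [sum_comm]
        refine sum_congr rfl fun χ _ => sum_congr rfl fun t _ => ?_
        rw [map_mul, map_mul, star_mul']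
        ring
    _ = _ := by
        refine sum_congr rfl fun χ _ => ?_
        rw [← mul_sum]
        congr 1
        simp only [charSum, star_sum, sum_product]
        rw [sum_mul_sum, sum_mul]
        simp_rw [sum_mul_sum]

theorem card_sub_div_totient_eq_sum {A B C : Finset ℕ} (hA : ∀ x ∈ A, IsUnit (x : ZMod n))
    (hB : ∀ y ∈ B, IsUnit (y : ZMod n)) (hC : ∀ z ∈ C, IsUnit (z : ZMod n)) {a : ZMod n}
    (ha : IsUnit a) :
    (#{t ∈ A ×ˢ B ×ˢ C | (t.1 : ZMod n) * t.2.1 = a * t.2.2} : ℂ) -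
        #A * #B * #C / n.totient =
      ∑ χ ∈ {χ | χ ≠ 1},
        charSum χ A * charSum χ B * star (charSum χ C) / n.totient * star (χ a) := by
  have hφ : (n.totient : ℂ) ≠ 0 := Nat.cast_ne_zero.2 (Nat.totient_pos.2 (NeZero.pos n)).ne'
  have hcount := totient_mul_card_eq_sum A B C ha hC
  rw [← add_sum_erase _ _ (mem_univ 1), MulChar.one_apply ha, charSum_one hA, charSum_one hB,
    charSum_one hC, star_one, one_mul, star_natCast] at hcount
  calc _ = ((n.totient : ℂ) * #{t ∈ A ×ˢ B ×ˢ C | (t.1 : ZMod n) * t.2.1 = a * t.2.2}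
          - #A * #B * #C) / n.totient := by field_simp
    _ = _ := by
      rw [hcount, add_sub_cancel_left, sum_div, filter_ne']
      exact sum_congr rfl fun χ _ => by ring

end DirichletCharacter

namespace ZMod

lemma isUnit_natCast_of_mem_Icc {p W : ℕ} (hp : p.Prime) (hW : W < p) (x : ℕ)
    (hx : x ∈ Icc 1 W) : IsUnit (x : ZMod p) :=
  (isUnit_iff_coprime x p).2 (Nat.coprime_of_lt_prime (Nat.one_le_iff_ne_zero.1 (mem_Icc.1 hx).1)
    ((mem_Icc.1 hx).2.trans_lt hW) hp).symm

lemma sum_Icc_natCast {M : Type*} [AddCommMonoid M] {n : ℕ} [NeZero n] {g : ZMod n → M}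
    (hg : g 0 = 0) : ∑ a ∈ Icc 1 (n - 1), g a = ∑ b, g b := by
  rw [← sum_erase _ hg]
  have hlt {a : ℕ} (ha : a ∈ Icc 1 (n - 1)) : a < n := by
    have := NeZero.pos n
    grind
  refine sum_nbij' (fun a => (a : ZMod n)) val (fun a ha => ?_) (fun b hb => ?_)
    (fun a ha => val_natCast_of_lt (hlt ha)) (fun b _ => natCast_zmod_val b) (fun _ _ => rfl)
  · rw [mem_erase, ne_eq, ← val_eq_zero, val_natCast_of_lt (hlt ha)]
    grind
  · rw [mem_erase, ne_eq, ← val_eq_zero] at hb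
    have := val_lt b
    grind

end ZMod

lemma Rcount_eq_card (s X Y Z a : ℕ) :
    Rcount s X Y Z a =
      #{t ∈ Icc 1 X ×ˢ Icc 1 Y ×ˢ Icc 1 Z | (t.1 : ZMod s) * t.2.1 = a * t.2.2} := by
  unfold Rcount
  congr 1
  refine filter_congr fun t _ => ?_
  rw [← Nat.cast_mul, ← Nat.cast_mul, ZMod.natCast_eq_natCast_iff']

open DirichletCharacter in
theorem Rcount_sub_eq_sum {s X Y Z a : ℕ} [Fact s.Prime] (hXs : X < s) (hYs : Y < s)
    (hZs : Z < s) (ha : a ∈ Icc 1 (s - 1)) :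
    (((Rcount s X Y Z a : ℝ) - X * Y * Z / ((s : ℝ) - 1) : ℝ) : ℂ) =
      ∑ χ ∈ {χ | χ ≠ 1}, charSum χ (Icc 1 X) * charSum χ (Icc 1 Y) *
        star (charSum χ (Icc 1 Z)) / s.totient * star (χ (a : ZMod s)) := by
  have hs : s.Prime := Fact.out
  rw [← card_sub_div_totient_eq_sum (ZMod.isUnit_natCast_of_mem_Icc hs hXs)
    (ZMod.isUnit_natCast_of_mem_Icc hs hYs) (ZMod.isUnit_natCast_of_mem_Icc hs hZs)
    (ZMod.isUnit_natCast_of_mem_Icc hs (Nat.sub_lt hs.pos one_pos) a ha), ← Rcount_eq_card,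
    Nat.card_Icc, Nat.card_Icc, Nat.card_Icc, Nat.totient_prime hs]
  push_cast [hs.one_le]
  rfl

open DirichletCharacter in
theorem rcount_second_moment_char_general (s : ℕ) (hs : s.Prime) (X Y Z : ℕ)
    (hXs : X < s) (hYs : Y < s) (hZs : Z < s) :
    ∑ a ∈ Finset.Icc 1 (s - 1),
        ((Rcount s X Y Z a : ℝ) - (X : ℝ) * Y * Z / ((s : ℝ) - 1)) ^ 2 =
      (1 / ((s : ℝ) - 1)) *
        ∑ χ ∈ Finset.univ.filter fun χ : DirichletCharacter ℂ s => χ ≠ 1,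
          ‖∑ x ∈ Finset.Icc 1 X, χ (x : ZMod s)‖ ^ 2 *
            ‖∑ y ∈ Finset.Icc 1 Y, χ (y : ZMod s)‖ ^ 2 *
            ‖∑ z ∈ Finset.Icc 1 Z, χ (z : ZMod s)‖ ^ 2 := by
  have : Fact s.Prime := ⟨hs⟩
  -- The statement's filter carries classical decidability; now that `ZMod s` is finite,
  -- switch to the `DecidableEq` instance of characters that the lemmas above are stated with.
  rw [filter_congr_decidable]
  set c : DirichletCharacter ℂ s → ℂ := fun χ =>
    charSum χ (Icc 1 X) * charSum χ (Icc 1 Y) * star (charSum χ (Icc 1 Z)) / s.totient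
  have hdev : ∀ a ∈ Icc 1 (s - 1),
      ((Rcount s X Y Z a : ℝ) - X * Y * Z / ((s : ℝ) - 1)) ^ 2 =
        ‖∑ χ ∈ {χ | χ ≠ 1}, c χ * star (χ a)‖ ^ 2 := fun a ha => by
    rw [← Rcount_sub_eq_sum hXs hYs hZs ha, Complex.norm_real, Real.norm_eq_abs, sq_abs]
  have hφ : (s : ℝ) - 1 = s.totient := by rw [Nat.totient_prime hs, Nat.cast_pred hs.pos]
  have hφ0 : (s.totient : ℝ) ≠ 0 := Nat.cast_ne_zero.2 (Nat.totient_pos.2 hs.pos).ne'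
  rw [sum_congr rfl hdev,
    ZMod.sum_Icc_natCast (g := fun b => ‖∑ χ ∈ {χ | χ ≠ 1}, c χ * star (χ b)‖ ^ 2)
      (by simp [MulChar.map_zero]),
    MulChar.sum_norm_sq_sum_mul_star, Nat.card_eq_fintype_card, ZMod.card_units_eq_totient, hφ,
    mul_sum, mul_sum]
  refine sum_congr rfl fun χ _ => ?_
  simp only [c, charSum, norm_div, norm_mul, norm_star, Complex.norm_natCast]
  field_simp

theorem rcount_second_moment_char (s : ℕ) (hs : s.Prime) (X Y Z : ℕ)
    (hX : 0 < X) (hY : 0 < Y) (hZ : 0 < Z)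
    (hXs : X < s) (hYs : Y < s) (hZs : Z < s) :
    ∑ a ∈ Finset.Icc 1 (s - 1),
        ((Rcount s X Y Z a : ℝ) - (X : ℝ) * Y * Z / ((s : ℝ) - 1)) ^ 2 =
      (1 / ((s : ℝ) - 1)) *
        ∑ χ ∈ Finset.univ.filter fun χ : DirichletCharacter ℂ s => χ ≠ 1,
          ‖∑ x ∈ Finset.Icc 1 X, χ (x : ZMod s)‖ ^ 2 *
            ‖∑ y ∈ Finset.Icc 1 Y, χ (y : ZMod s)‖ ^ 2 *
            ‖∑ z ∈ Finset.Icc 1 Z, χ (z : ZMod s)‖ ^ 2 :=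
  rcount_second_moment_char_general s hs X Y Z hXs hYs hZs
end

section
/- Let q, M, N be positive integers, let a be an integer with 1 ≤ a ≤ q, and let d = gcd(a, q). Then T_q(M, N; a) = Σ_{e | d} T*_{q/e}(⌊M/e⌋, N; a/e), i.e., the number of pairs (m, n) with 1 ≤ m ≤ M, 1 ≤ n ≤ N and m·n ≡ a (mod q) equals the sum over divisors e of d of the number of pairs (x, y) with 1 ≤ x ≤ ⌊M/e⌋, gcd(x, q/e) = 1, 1 ≤ y ≤ N and x·y ≡ (a/e) (mod q/e). -/
/-! Sort the pairs `(m, n)` by `e = gcd(m, q)`. Every such `e` divides `gcd(a, q)`, and writing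
`m = e x` the conditions `gcd(m, q) = e` and `m n ≡ a (mod q)` become `gcd(x, q/e) = 1` and
`x n ≡ a/e (mod q/e)`, so the class of `e` is counted by `T*_{q/e}(⌊M/e⌋, N; a/e)`. -/

/-- `T_q(M, N; a)`: the number of pairs `(m, n)` with `1 ≤ m ≤ M`, `1 ≤ n ≤ N`
and `m n ≡ a (mod q)`. -/
def Tcount (q M N a : ℕ) : ℕ :=
  ((Finset.Icc 1 M ×ˢ Finset.Icc 1 N).filter fun p => (p.1 * p.2) % q = a % q).card

/-- `T*_s(X, Y; b)`: the number of pairs `(x, y)` with `1 ≤ x ≤ X`, `gcd(x, s) = 1`,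
`1 ≤ y ≤ Y` and `x y ≡ b (mod s)`. -/
def TstarCount (s X Y b : ℕ) : ℕ :=
  ((Finset.Icc 1 X ×ˢ Finset.Icc 1 Y).filter
    fun p => Nat.gcd p.1 s = 1 ∧ (p.1 * p.2) % s = b % s).card

open Finset

namespace Nat

variable {e x q a n : ℕ}

theorem mul_mem_Icc_one_iff {M : ℕ} (he : e ≠ 0) : e * x ∈ Icc 1 M ↔ x ∈ Icc 1 (M / e) := by
  simp only [mem_Icc, Nat.le_div_iff_mul_le (Nat.pos_of_ne_zero he), Nat.one_le_iff_ne_zero,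
    mul_ne_zero_iff, mul_comm x e]
  tauto

theorem gcd_mul_left_eq_self_iff (he : e ≠ 0) (heq : e ∣ q) :
    gcd (e * x) q = e ↔ Coprime x (q / e) := by
  conv_lhs => rw [← Nat.mul_div_cancel' heq, gcd_mul_left]
  exact ⟨fun h => Nat.eq_of_mul_eq_mul_left (Nat.pos_of_ne_zero he) (h.trans (mul_one e).symm),
    fun h => by rw [h.gcd_eq_one, mul_one]⟩

theorem mul_mul_modEq_iff (he : e ≠ 0) (heq : e ∣ q) (hea : e ∣ a) :
    e * x * n ≡ a [MOD q] ↔ x * n ≡ a / e [MOD q / e] := by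
  conv_lhs => rw [← Nat.mul_div_cancel' heq, ← Nat.mul_div_cancel' hea, mul_assoc]
  exact ModEq.mul_left_cancel_iff' he

theorem gcd_dvd_gcd_of_mul_modEq {m : ℕ} (h : m * n ≡ a [MOD q]) : gcd m q ∣ gcd a q :=
  dvd_gcd ((h.dvd_iff (gcd_dvd_right m q)).1 (dvd_mul_of_dvd_left (gcd_dvd_left m q) n))
    (gcd_dvd_right m q)

theorem gcd_mem_divisors_gcd_of_mul_modEq {m : ℕ} (hm : m ≠ 0) (hn : n ≠ 0)
    (h : m * n ≡ a [MOD q]) : gcd m q ∈ (gcd a q).divisors := by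
  refine mem_divisors.2 ⟨gcd_dvd_gcd_of_mul_modEq h, fun h0 => ?_⟩
  obtain ⟨rfl, rfl⟩ := gcd_eq_zero_iff.1 h0
  exact mul_ne_zero hm hn (modEq_zero_iff.1 h)

end Nat

theorem card_filter_gcd_eq_tstarCount {q M N a e : ℕ} (he : e ≠ 0) (heq : e ∣ q) (hea : e ∣ a) :
    #{p ∈ {p ∈ Icc 1 M ×ˢ Icc 1 N | p.1 * p.2 % q = a % q} | Nat.gcd p.1 q = e} =
      TstarCount (q / e) (M / e) N (a / e) := by
  rw [TstarCount]
  set S := {p ∈ {p ∈ Icc 1 M ×ˢ Icc 1 N | p.1 * p.2 % q = a % q} | Nat.gcd p.1 q = e}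
  set T := {p ∈ Icc 1 (M / e) ×ˢ Icc 1 N |
    Nat.gcd p.1 (q / e) = 1 ∧ p.1 * p.2 % (q / e) = a / e % (q / e)}
  have hmem (x n : ℕ) : (e * x, n) ∈ S ↔ (x, n) ∈ T := by
    have hmod : e * x * n % q = a % q ↔ x * n % (q / e) = a / e % (q / e) :=
      Nat.mul_mul_modEq_iff he heq hea
    simp only [S, T, mem_filter, mem_product, Nat.mul_mem_Icc_one_iff he,
      Nat.gcd_mul_left_eq_self_iff he heq, Nat.Coprime, hmod]
    tauto
  have hS : S = T.image (Prod.map (e * ·) id) := by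
    ext ⟨m, n⟩
    constructor
    · intro h
      obtain ⟨x, rfl⟩ : e ∣ m := (mem_filter.1 h).2 ▸ Nat.gcd_dvd_left m q
      exact mem_image.2 ⟨(x, n), (hmem x n).1 h, rfl⟩
    · intro h
      obtain ⟨⟨x, y⟩, hxy, hxym⟩ := mem_image.1 h
      obtain ⟨rfl, rfl⟩ := Prod.ext_iff.1 hxym
      exact (hmem x y).2 hxy
  rw [hS, card_image_of_injective _ ((mul_right_injective₀ he).prodMap Function.injective_id)]

theorem tcount_eq_sum_tstar_general (q M N a : ℕ) :
    Tcount q M N a =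
      ∑ e ∈ (Nat.gcd a q).divisors, TstarCount (q / e) (M / e) N (a / e) := by
  have hmaps : Set.MapsTo (fun p : ℕ × ℕ => Nat.gcd p.1 q)
      (({p ∈ Icc 1 M ×ˢ Icc 1 N | p.1 * p.2 % q = a % q} : Finset (ℕ × ℕ)) : Set (ℕ × ℕ))
      (Nat.gcd a q).divisors := by
    rintro ⟨m, n⟩ hp
    simp only [mem_coe, mem_filter, mem_product, mem_Icc] at hp
    obtain ⟨⟨⟨hm, -⟩, hn, -⟩, hmod⟩ := hp
    exact Nat.gcd_mem_divisors_gcd_of_mul_modEq (by omega) (by omega) hmod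
  rw [Tcount, card_eq_sum_card_fiberwise hmaps]
  refine sum_congr rfl fun e he => ?_
  obtain ⟨hed, hd0⟩ := Nat.mem_divisors.1 he
  exact card_filter_gcd_eq_tstarCount (ne_zero_of_dvd_ne_zero hd0 hed)
    (hed.trans (Nat.gcd_dvd_right a q)) (hed.trans (Nat.gcd_dvd_left a q))

theorem tcount_eq_sum_tstar (q M N a : ℕ) (hq : 0 < q) (hM : 0 < M) (hN : 0 < N)
    (ha1 : 1 ≤ a) (haq : a ≤ q) :
    Tcount q M N a =
      ∑ e ∈ (Nat.gcd a q).divisors, TstarCount (q / e) (M / e) N (a / e) :=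
  tcount_eq_sum_tstar_general q M N a
end
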